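/- arXiv:2002.09641 — 4 statements merged into one kernel-verified Lean document; each statement's English description precedes it below -/
import Mathlib

section
/- For $\beta \in (1/2, 1)$ and $\theta > 0$, there exists a constant $C > 0$ (independent of $T$) such that for all $T \geq 1$, $\int_{[0,T]^2} e^{-\theta|r-s|}(rs)^{\beta-1}\,dr\,ds \leq C\, T^{2\beta-1}$. -/
/-!
Since `(r s)^(β-1) = r^(β-1) s^(β-1)`, it suffices to show that for `0 < r ≤ T` the inner integral
`∫₀ᵀ e^{-θ|r-s|} s^(β-1) ds` is `O(r^(β-1))`. Split at `s = r/2`: below it the exponential is at most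
`e^{-θr/2} ≤ 2/(θr)` and `∫₀^{r/2} s^(β-1) ds ≤ r^β/β`; above it `s^(β-1) ≤ 2 r^(β-1)` and the
exponential integrates to at most `2/θ` over the whole line. Integrating `r^(2β-2)` over `(0, T]`
then gives `T^(2β-1)/(2β-1)`, which is finite because `β > 1/2`.
-/

open MeasureTheory Real Set

lemma Real.exp_neg_le_inv {x : ℝ} (hx : 0 < x) : exp (-x) ≤ x⁻¹ := by
  rw [exp_neg]
  exact inv_anti₀ hx (by linarith [add_one_le_exp x])

lemma integral_exp_neg_mul_abs {θ : ℝ} (hθ : 0 < θ) : ∫ s, exp (-θ * |s|) = 2 / θ := by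
  rw [integral_comp_abs (f := fun s => exp (-θ * s)), integral_exp_mul_Ioi (neg_neg_of_pos hθ)]
  simp only [mul_zero, exp_zero]
  ring

lemma integrable_exp_neg_mul_abs {θ : ℝ} (hθ : 0 < θ) : Integrable fun s => exp (-θ * |s|) :=
  Integrable.of_integral_ne_zero (by rw [integral_exp_neg_mul_abs hθ]; positivity)

lemma setIntegral_exp_neg_mul_abs_sub_le {θ : ℝ} (hθ : 0 < θ) (r : ℝ) (A : Set ℝ) :
    ∫ s in A, exp (-θ * |r - s|) ≤ 2 / θ :=
  calc ∫ s in A, exp (-θ * |r - s|)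
      ≤ ∫ s, exp (-θ * |r - s|) :=
        setIntegral_le_integral ((integrable_exp_neg_mul_abs hθ).comp_sub_left r)
          (ae_of_all _ fun _ => (exp_pos _).le)
    _ = 2 / θ := by
        rw [integral_sub_left_eq_self (fun s => exp (-θ * |s|)), integral_exp_neg_mul_abs hθ]

lemma integrableOn_Ioc_zero_rpow {γ : ℝ} (hγ : -1 < γ) (b : ℝ) :
    IntegrableOn (fun s => s ^ γ) (Ioc 0 b) :=
  (intervalIntegral.intervalIntegrable_rpow' (a := 0) (b := b) hγ).1

lemma setIntegral_Ioc_zero_rpow_sub_one {β : ℝ} (hβ : 0 < β) {b : ℝ} (hb : 0 ≤ b) :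
    ∫ s in Ioc 0 b, s ^ (β - 1) = b ^ β / β := by
  rw [← intervalIntegral.integral_of_le hb, integral_rpow (Or.inl (by linarith)), sub_add_cancel,
    zero_rpow hβ.ne', sub_zero]

section InnerIntegral

variable {θ β r : ℝ}

lemma setIntegral_Ioc_zero_half_exp_mul_rpow_le (hθ : 0 < θ) (hβ : 0 < β) (hr : 0 < r) :
    ∫ s in Ioc 0 (r / 2), exp (-θ * |r - s|) * s ^ (β - 1) ≤ 2 / (θ * β) * r ^ (β - 1) := by
  have hexp : ∀ s ∈ Ioc 0 (r / 2), exp (-θ * |r - s|) ≤ 2 / (θ * r) := fun s hs => by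
    calc exp (-θ * |r - s|) ≤ exp (-(θ * (r / 2))) := by
          rw [abs_of_pos (by linarith [hs.2])]
          gcongr; nlinarith [hs.2]
      _ ≤ (θ * (r / 2))⁻¹ := exp_neg_le_inv (by positivity)
      _ = 2 / (θ * r) := by field_simp
  calc ∫ s in Ioc 0 (r / 2), exp (-θ * |r - s|) * s ^ (β - 1)
      ≤ ∫ s in Ioc 0 (r / 2), 2 / (θ * r) * s ^ (β - 1) := by
        refine integral_mono_of_nonneg
          (ae_restrict_of_forall_mem measurableSet_Ioc fun s hs => ?_)
          ((integrableOn_Ioc_zero_rpow (by linarith) _).const_mul _)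
          (ae_restrict_of_forall_mem measurableSet_Ioc fun s hs => ?_)
        · exact mul_nonneg (exp_pos _).le (rpow_nonneg hs.1.le _)
        · exact mul_le_mul_of_nonneg_right (hexp s hs) (rpow_nonneg hs.1.le _)
    _ = 2 / (θ * r) * ((r / 2) ^ β / β) := by
        rw [integral_const_mul, setIntegral_Ioc_zero_rpow_sub_one hβ (by positivity)]
    _ ≤ 2 / (θ * r) * (r ^ β / β) := by gcongr; linarith
    _ = 2 / (θ * β) * r ^ (β - 1) := by rw [rpow_sub_one hr.ne']; field_simp

lemma setIntegral_Ioc_half_exp_mul_rpow_le (hθ : 0 < θ) (hβ₀ : 0 ≤ β) (hβ₁ : β ≤ 1) (hr : 0 < r)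
    (T : ℝ) :
    ∫ s in Ioc (r / 2) T, exp (-θ * |r - s|) * s ^ (β - 1) ≤ 4 / θ * r ^ (β - 1) := by
  have hrpow : ∀ s ∈ Ioc (r / 2) T, s ^ (β - 1) ≤ 2 * r ^ (β - 1) := fun s hs => by
    have htwo : (2 : ℝ)⁻¹ ≤ 2 ^ (β - 1) := by
      rw [← rpow_neg_one]
      exact rpow_le_rpow_of_exponent_le one_le_two (by linarith)
    calc s ^ (β - 1) ≤ (r / 2) ^ (β - 1) :=
          rpow_le_rpow_of_nonpos (by positivity) hs.1.le (by linarith)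
      _ = r ^ (β - 1) / 2 ^ (β - 1) := div_rpow hr.le zero_le_two _
      _ ≤ r ^ (β - 1) / 2⁻¹ := by gcongr
      _ = 2 * r ^ (β - 1) := by ring
  calc ∫ s in Ioc (r / 2) T, exp (-θ * |r - s|) * s ^ (β - 1)
      ≤ ∫ s in Ioc (r / 2) T, exp (-θ * |r - s|) * (2 * r ^ (β - 1)) := by
        refine integral_mono_of_nonneg
          (ae_restrict_of_forall_mem measurableSet_Ioc fun s hs => ?_)
          (((integrable_exp_neg_mul_abs hθ).comp_sub_left r).integrableOn.mul_const _)
          (ae_restrict_of_forall_mem measurableSet_Ioc fun s hs => ?_)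
        · exact mul_nonneg (exp_pos _).le (rpow_nonneg (by linarith [hs.1]) _)
        · exact mul_le_mul_of_nonneg_left (hrpow s hs) (exp_pos _).le
    _ = (∫ s in Ioc (r / 2) T, exp (-θ * |r - s|)) * (2 * r ^ (β - 1)) := integral_mul_const _ _
    _ ≤ 2 / θ * (2 * r ^ (β - 1)) := by
        gcongr
        exact setIntegral_exp_neg_mul_abs_sub_le hθ r _
    _ = 4 / θ * r ^ (β - 1) := by ring

lemma setIntegral_Ioc_zero_exp_mul_rpow_le (hθ : 0 < θ) (hβ₀ : 0 < β) (hβ₁ : β ≤ 1) (hr : 0 < r)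
    {T : ℝ} (hrT : r ≤ T) :
    ∫ s in Ioc 0 T, exp (-θ * |r - s|) * s ^ (β - 1) ≤ (2 / (θ * β) + 4 / θ) * r ^ (β - 1) := by
  have hint : IntegrableOn (fun s => exp (-θ * |r - s|) * s ^ (β - 1)) (Ioc 0 T) := by
    refine (integrableOn_Ioc_zero_rpow (γ := β - 1) (by linarith) T).mono'
      (by fun_prop : Measurable _).aestronglyMeasurable
      (ae_restrict_of_forall_mem measurableSet_Ioc fun s hs => ?_)
    have hexp : exp (-θ * |r - s|) ≤ 1 := exp_le_one_iff.2 (by nlinarith [abs_nonneg (r - s)])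
    rw [norm_of_nonneg (mul_nonneg (exp_pos _).le (rpow_nonneg hs.1.le _))]
    exact mul_le_of_le_one_left (rpow_nonneg hs.1.le _) hexp
  have hsplit : Ioc 0 (r / 2) ∪ Ioc (r / 2) T = Ioc 0 T :=
    Ioc_union_Ioc_eq_Ioc (by positivity) (by linarith)
  rw [← hsplit, setIntegral_union (Ioc_disjoint_Ioc_of_le le_rfl) measurableSet_Ioc
    (hint.mono_set (hsplit ▸ subset_union_left)) (hint.mono_set (hsplit ▸ subset_union_right)),
    add_mul]
  exact add_le_add (setIntegral_Ioc_zero_half_exp_mul_rpow_le hθ hβ₀ hr)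
    (setIntegral_Ioc_half_exp_mul_rpow_le hθ hβ₀.le hβ₁ hr T)

lemma setIntegral_Ioc_zero_exp_mul_mul_rpow_le (hθ : 0 < θ) (hβ₀ : 0 < β) (hβ₁ : β ≤ 1) (hr : 0 < r)
    {T : ℝ} (hrT : r ≤ T) :
    ∫ s in Ioc 0 T, exp (-θ * |r - s|) * (r * s) ^ (β - 1)
      ≤ (2 / (θ * β) + 4 / θ) * r ^ (2 * β - 1 - 1) := by
  calc ∫ s in Ioc 0 T, exp (-θ * |r - s|) * (r * s) ^ (β - 1)
      = r ^ (β - 1) * ∫ s in Ioc 0 T, exp (-θ * |r - s|) * s ^ (β - 1) := by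
        rw [← integral_const_mul]
        refine setIntegral_congr_fun measurableSet_Ioc fun s hs => ?_
        simp only [mul_rpow hr.le hs.1.le]
        ring
    _ ≤ r ^ (β - 1) * ((2 / (θ * β) + 4 / θ) * r ^ (β - 1)) := by
        gcongr
        exact setIntegral_Ioc_zero_exp_mul_rpow_le hθ hβ₀ hβ₁ hr hrT
    _ = (2 / (θ * β) + 4 / θ) * r ^ (2 * β - 1 - 1) := by
        rw [mul_left_comm, ← rpow_add hr]
        ring_nf

end InnerIntegral

theorem stmt_2 (β θ : ℝ) (hβ : β ∈ Set.Ioo (1/2 : ℝ) 1) (hθ : 0 < θ) :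
    ∃ C > (0:ℝ), ∀ T : ℝ, 1 ≤ T →
      (∫ r in Set.Ioc (0:ℝ) T, ∫ s in Set.Ioc (0:ℝ) T,
          Real.exp (-θ * |r - s|) * (r * s) ^ (β - 1))
        ≤ C * T ^ (2 * β - 1) := by
  obtain ⟨hβ₁, hβ₂⟩ := hβ
  have hβ₀ : 0 < β := by linarith
  have hγ : 0 < 2 * β - 1 := by linarith
  set K := 2 / (θ * β) + 4 / θ
  refine ⟨K / (2 * β - 1), by positivity, fun T hT => ?_⟩
  calc (∫ r in Ioc 0 T, ∫ s in Ioc 0 T, exp (-θ * |r - s|) * (r * s) ^ (β - 1))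
      ≤ ∫ r in Ioc 0 T, K * r ^ (2 * β - 1 - 1) := by
        refine integral_mono_of_nonneg
          (ae_restrict_of_forall_mem measurableSet_Ioc fun r hr => ?_)
          ((integrableOn_Ioc_zero_rpow (by linarith) T).const_mul K)
          (ae_restrict_of_forall_mem measurableSet_Ioc fun r hr =>
            setIntegral_Ioc_zero_exp_mul_mul_rpow_le hθ hβ₀ hβ₂.le hr.1 hr.2)
        exact setIntegral_nonneg measurableSet_Ioc fun s hs =>
          mul_nonneg (exp_pos _).le (rpow_nonneg (mul_nonneg hr.1.le hs.1.le) _)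
    _ = K / (2 * β - 1) * T ^ (2 * β - 1) := by
        rw [integral_const_mul, setIntegral_Ioc_zero_rpow_sub_one hγ (by linarith)]
        ring
end

section
/- For $\beta \in (1/2,1)$ and $\theta > 0$, there exists a constant $C > 0$ independent of $T$ such that for all $r \in [0,T]$, $\int_0^T e^{-\theta|r-u|} u^{\beta-1}\,du \leq C\, r^{\beta-1}$. -/
/-!
Split the integral at `r / 2`. On `(0, r/2]` the kernel is at most `exp (-θ r/2)` and
`∫₀^{r/2} u^(β-1) du = (r/2)^β / β`; the extra factor `r/2` is absorbed by
`x exp (-θ x) ≤ 1/θ`. On `[r/2, T]` the weight is at most `(r/2)^(β-1)` and the kernel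
`exp (-θ |r - u|)` has total mass at most `2/θ`. Both bounds are multiples of `(r/2)^(β-1)`
with constants independent of `r` and `T`.
-/

open MeasureTheory Real Set

lemma mul_exp_neg_mul_le_inv {θ : ℝ} (hθ : 0 < θ) (x : ℝ) : x * exp (-θ * x) ≤ θ⁻¹ := by
  have hlin : θ * x ≤ exp (θ * x) - 1 := by linarith [add_one_le_exp (θ * x)]
  have hinv : exp (θ * x) * exp (-θ * x) = 1 := by rw [← exp_add]; simp
  rw [← one_div, le_div_iff₀' hθ]
  nlinarith [mul_le_mul_of_nonneg_right hlin (exp_pos (-θ * x)).le, exp_pos (-θ * x)]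

lemma integral_exp_neg_mul_le_inv {θ : ℝ} (hθ : 0 < θ) (x : ℝ) :
    ∫ v in (0 : ℝ)..x, exp (-θ * v) ≤ θ⁻¹ := by
  rw [intervalIntegral.integral_comp_mul_left (fun v => exp v) (neg_ne_zero.2 hθ.ne'),
    integral_exp, smul_eq_mul, mul_zero, exp_zero, inv_neg, neg_mul, ← mul_neg, neg_sub]
  exact mul_le_of_le_one_right (inv_nonneg.2 hθ.le) (by linarith [exp_pos (-θ * x)])

lemma integral_exp_neg_mul_abs_sub_le {θ a r b : ℝ} (hθ : 0 < θ) (har : a ≤ r) (hrb : r ≤ b) :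
    ∫ u in a..b, exp (-θ * |r - u|) ≤ 2 / θ := by
  have hint (x y : ℝ) : IntervalIntegrable (fun u => exp (-θ * |r - u|)) volume x y :=
    (by fun_prop : Continuous _).intervalIntegrable x y
  have hleft : ∫ u in a..r, exp (-θ * |r - u|) = ∫ v in (0 : ℝ)..(r - a), exp (-θ * v) := by
    rw [intervalIntegral.integral_congr (g := fun u => exp (-θ * (r - u))) fun u hu => ?_,
      intervalIntegral.integral_comp_sub_left (fun v => exp (-θ * v)), sub_self]
    rw [uIcc_of_le har] at hu
    simp only [abs_of_nonneg (sub_nonneg.2 hu.2)]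
  have hright : ∫ u in r..b, exp (-θ * |r - u|) = ∫ v in (0 : ℝ)..(b - r), exp (-θ * v) := by
    rw [intervalIntegral.integral_congr (g := fun u => exp (-θ * (u - r))) fun u hu => ?_,
      intervalIntegral.integral_comp_sub_right (fun v => exp (-θ * v)), sub_self]
    rw [uIcc_of_le hrb] at hu
    simp only [abs_sub_comm r u, abs_of_nonneg (sub_nonneg.2 hu.1)]
  rw [← intervalIntegral.integral_add_adjacent_intervals (hint a r) (hint r b), hleft, hright]
  linarith [integral_exp_neg_mul_le_inv hθ (r - a), integral_exp_neg_mul_le_inv hθ (b - r),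
    show 2 / θ = θ⁻¹ + θ⁻¹ by ring]

lemma integral_exp_neg_mul_abs_sub_mul_rpow_le_two_div {θ β a r b : ℝ} (hθ : 0 < θ) (hβ : β ≤ 1)
    (ha : 0 < a) (har : a ≤ r) (hrb : r ≤ b) :
    ∫ u in a..b, exp (-θ * |r - u|) * u ^ (β - 1) ≤ 2 / θ * a ^ (β - 1) := by
  have hab := har.trans hrb
  calc ∫ u in a..b, exp (-θ * |r - u|) * u ^ (β - 1)
      ≤ ∫ u in a..b, exp (-θ * |r - u|) * a ^ (β - 1) := by
        refine intervalIntegral.integral_mono_on hab ?_ ?_ fun u hu => ?_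
        · refine ((intervalIntegral.intervalIntegrable_rpow (Or.inr ?_)).continuousOn_mul
            (by fun_prop : Continuous _).continuousOn)
          rw [uIcc_of_le hab]
          exact fun h => ha.not_ge h.1
        · exact (by fun_prop : Continuous _).intervalIntegrable _ _
        · exact mul_le_mul_of_nonneg_left (rpow_le_rpow_of_nonpos ha hu.1 (by linarith))
            (exp_pos _).le
    _ = (∫ u in a..b, exp (-θ * |r - u|)) * a ^ (β - 1) := intervalIntegral.integral_mul_const _ _
    _ ≤ 2 / θ * a ^ (β - 1) := by
        gcongr
        exact integral_exp_neg_mul_abs_sub_le hθ har hrb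

lemma integral_exp_neg_mul_abs_sub_mul_rpow_le_exp {θ β a r : ℝ} (hθ : 0 ≤ θ) (hβ : 0 < β)
    (ha : 0 ≤ a) :
    ∫ u in (0 : ℝ)..a, exp (-θ * |r - u|) * u ^ (β - 1) ≤ exp (-θ * (r - a)) * (a ^ β / β) := by
  have hβ' : -1 < β - 1 := by linarith
  calc ∫ u in (0 : ℝ)..a, exp (-θ * |r - u|) * u ^ (β - 1)
      ≤ ∫ u in (0 : ℝ)..a, exp (-θ * (r - a)) * u ^ (β - 1) := by
        refine intervalIntegral.integral_mono_on ha ?_ ?_ fun u hu => ?_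
        · exact (intervalIntegral.intervalIntegrable_rpow' hβ').continuousOn_mul
            (by fun_prop : Continuous _).continuousOn
        · exact (intervalIntegral.intervalIntegrable_rpow' hβ').const_mul _
        · have : r - a ≤ |r - u| := by linarith [le_abs_self (r - u), hu.2]
          exact mul_le_mul_of_nonneg_right (exp_le_exp.2 (by nlinarith)) (rpow_nonneg hu.1 _)
    _ = exp (-θ * (r - a)) * (a ^ β / β) := by
        rw [intervalIntegral.integral_const_mul, integral_rpow (Or.inl hβ'), sub_add_cancel,
          zero_rpow hβ.ne']
        ring

lemma integral_exp_neg_mul_abs_sub_mul_rpow_le {θ β r T : ℝ} (hθ : 0 < θ) (hβ : β ∈ Ioo 0 1)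
    (hr : 0 < r) (hrT : r ≤ T) :
    ∫ u in (0 : ℝ)..T, exp (-θ * |r - u|) * u ^ (β - 1) ≤ (1 / β + 2) / θ * (r / 2) ^ (β - 1) := by
  obtain ⟨hβ0, hβ1⟩ := hβ
  have hr2 : 0 < r / 2 := half_pos hr
  have hint (x y : ℝ) :
      IntervalIntegrable (fun u => exp (-θ * |r - u|) * u ^ (β - 1)) volume x y :=
    (intervalIntegral.intervalIntegrable_rpow' (by linarith)).continuousOn_mul
      (by fun_prop : Continuous _).continuousOn
  have hnear : ∫ u in (0 : ℝ)..(r / 2), exp (-θ * |r - u|) * u ^ (β - 1)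
      ≤ 1 / β / θ * (r / 2) ^ (β - 1) := by
    have hpow : (r / 2) ^ β = (r / 2) * (r / 2) ^ (β - 1) := by
      rw [mul_comm, ← rpow_add_one hr2.ne', sub_add_cancel]
    calc _ ≤ exp (-θ * (r - r / 2)) * ((r / 2) ^ β / β) :=
          integral_exp_neg_mul_abs_sub_mul_rpow_le_exp hθ.le hβ0 hr2.le
      _ = (r / 2 * exp (-θ * (r / 2))) * ((r / 2) ^ (β - 1) / β) := by
          rw [hpow, sub_half]; ring
      _ ≤ θ⁻¹ * ((r / 2) ^ (β - 1) / β) := by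
          gcongr
          exact mul_exp_neg_mul_le_inv hθ _
      _ = 1 / β / θ * (r / 2) ^ (β - 1) := by ring
  have hfar :=
    integral_exp_neg_mul_abs_sub_mul_rpow_le_two_div hθ hβ1.le hr2 (half_le_self hr.le) hrT
  rw [← intervalIntegral.integral_add_adjacent_intervals (hint 0 (r / 2)) (hint (r / 2) T)]
  linarith [show (1 / β + 2) / θ * (r / 2) ^ (β - 1)
    = 1 / β / θ * (r / 2) ^ (β - 1) + 2 / θ * (r / 2) ^ (β - 1) by ring]

theorem stmt_3 (β θ : ℝ) (hβ : β ∈ Set.Ioo (1/2 : ℝ) 1) (hθ : 0 < θ) :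
    ∃ C > (0:ℝ), ∀ T : ℝ, 0 < T → ∀ r ∈ Set.Ioc (0:ℝ) T,
      (∫ u in Set.Ioc (0:ℝ) T, Real.exp (-θ * |r - u|) * u ^ (β - 1))
        ≤ C * r ^ (β - 1) := by
  have hβ' : β ∈ Ioo 0 1 := ⟨by linarith [hβ.1], hβ.2⟩
  refine ⟨(1 / β + 2) / θ / 2 ^ (β - 1), by have := hβ'.1; positivity, fun T hT r hr => ?_⟩
  rw [← intervalIntegral.integral_of_le hT.le, div_mul_comm, ← div_rpow hr.1.le zero_le_two,
    mul_comm]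
  exact integral_exp_neg_mul_abs_sub_mul_rpow_le hθ hβ' hr.1 hr.2
end

section
/- For $\beta \in (1/2,1)$ and $\theta > 0$, and for all $0 \le s < t$, $\int_{0\le r_1 \le u_1 \le s \le r_2 \le u_2 \le t} e^{-\theta(r_2 - r_1)} e^{-\theta(u_2 - u_1)} (u_1 - r_1)^{2\beta-2}(u_2 - r_2)^{2\beta-2}\,dr_1\,du_1\,dr_2\,du_2 \le \frac{\Gamma(2\beta-1)}{4\theta^{2\beta+1}(2\beta-1)}(t-s)^{2\beta-1}$. -/
/-!
With `a = 2β - 2 > -1`, the integrand splits as `e^{-θ(r₂+u₂)} (u₂-r₂)^a · e^{θ(r₁+u₁)} (u₁-r₁)^a`,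
so the integral is the product of two double integrals.

In the `(r₁, u₁)` factor, `v = u₁ - r₁` turns the inner integral into
`e^{2θu₁} ∫₀^{u₁} v^a e^{-θv} dv ≤ e^{2θu₁} Γ(a+1) / θ^{a+1}`, and `∫_{u₁ ≤ s} e^{2θu₁} ≤ e^{2θs} / (2θ)`.

In the `(r₂, u₂)` factor, `v = u₂ - r₂` and `y = u₂ - s` give
`e^{-2θs} ∫_{0 ≤ v ≤ y ≤ t-s} e^{-2θy} v^a e^{θv}`. Integrating first in `y` over `[v, ∞)` costs
`e^{-2θv} / (2θ)`, which leaves `v^a e^{-θv} / (2θ) ≤ v^a / (2θ)`: this order of integration is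
where the factor `1/2` of the bound comes from. The factors `e^{±2θs}` cancel in the product.
-/

open MeasureTheory Real Set Function

section IccIntegral

variable {E : Type*} [NormedAddCommGroup E] [NormedSpace ℝ E]

theorem setIntegral_Icc_comp_sub_left (f : ℝ → E) (a b d : ℝ) :
    ∫ x in Icc a b, f (d - x) = ∫ x in Icc (d - b) (d - a), f x := by
  rcases le_or_gt a b with hab | hba
  · rw [integral_Icc_eq_integral_Ioc, integral_Icc_eq_integral_Ioc,
      ← intervalIntegral.integral_of_le hab, ← intervalIntegral.integral_of_le (by linarith),
      intervalIntegral.integral_comp_sub_left]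
  · rw [Icc_eq_empty_of_lt hba, Icc_eq_empty_of_lt (by linarith)]
    simp only [Measure.restrict_empty, integral_zero_measure]

theorem setIntegral_Icc_comp_sub_right (f : ℝ → E) (a b d : ℝ) :
    ∫ x in Icc a b, f (x - d) = ∫ x in Icc (a - d) (b - d), f x := by
  rcases le_or_gt a b with hab | hba
  · rw [integral_Icc_eq_integral_Ioc, integral_Icc_eq_integral_Ioc,
      ← intervalIntegral.integral_of_le hab, ← intervalIntegral.integral_of_le (by linarith),
      intervalIntegral.integral_comp_sub_right]
  · rw [Icc_eq_empty_of_lt hba, Icc_eq_empty_of_lt (by linarith)]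
    simp only [Measure.restrict_empty, integral_zero_measure]

theorem integral_Icc_integral_Icc_swap {f : ℝ → ℝ → E} {a b : ℝ}
    (hf : IntegrableOn (uncurry f) (Icc a b ×ˢ Icc a b)) :
    ∫ x in Icc a b, ∫ y in Icc a x, f x y = ∫ y in Icc a b, ∫ x in Icc y b, f x y := by
  set T : Set (ℝ × ℝ) := {p | p.2 ≤ p.1}
  have hT : MeasurableSet T := measurableSet_le measurable_snd measurable_fst
  have hint : Integrable (uncurry fun x y => T.indicator (uncurry f) (x, y))
      ((volume.restrict (Icc a b)).prod (volume.restrict (Icc a b))) := by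
    rw [Measure.prod_restrict, ← Measure.volume_eq_prod]
    exact hf.indicator hT
  have hleft : ∀ x ∈ Icc a b,
      ∫ y in Icc a x, f x y = ∫ y in Icc a b, T.indicator (uncurry f) (x, y) := by
    intro x hx
    have hsec : (fun y => T.indicator (uncurry f) (x, y)) = (Iic x).indicator (f x) := by
      ext y; simp [T, indicator]
    have hset : Iic x ∩ Icc a b = Icc a x := by
      ext y
      simp only [mem_inter_iff, mem_Iic, mem_Icc]
      exact ⟨fun ⟨hyx, hay, _⟩ => ⟨hay, hyx⟩, fun ⟨hay, hyx⟩ => ⟨hyx, hay, hyx.trans hx.2⟩⟩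
    rw [hsec, integral_indicator measurableSet_Iic, Measure.restrict_restrict measurableSet_Iic,
      hset]
  have hright : ∀ y ∈ Icc a b,
      ∫ x in Icc a b, T.indicator (uncurry f) (x, y) = ∫ x in Icc y b, f x y := by
    intro y hy
    have hsec : (fun x => T.indicator (uncurry f) (x, y)) = (Ici y).indicator (f · y) := by
      ext x; simp [T, indicator]
    have hset : Ici y ∩ Icc a b = Icc y b := by
      ext x
      simp only [mem_inter_iff, mem_Ici, mem_Icc]
      exact ⟨fun ⟨hyx, _, hxb⟩ => ⟨hyx, hxb⟩, fun ⟨hyx, hxb⟩ => ⟨hyx, hy.1.trans hyx, hxb⟩⟩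
    rw [hsec, integral_indicator measurableSet_Ici, Measure.restrict_restrict measurableSet_Ici,
      hset]
  rw [setIntegral_congr_fun measurableSet_Icc hleft, integral_integral_swap hint]
  exact setIntegral_congr_fun measurableSet_Icc hright

end IccIntegral

section ExpRpowKernel

variable {a θ : ℝ}

theorem integral_Icc_rpow_mul_exp_neg_mul_le_Gamma (ha : -1 < a) (hθ : 0 < θ) (u : ℝ) :
    ∫ v in Icc 0 u, v ^ a * exp (-(θ * v)) ≤ (1 / θ) ^ (a + 1) * Gamma (a + 1) := by
  have hint : IntegrableOn (fun v : ℝ => v ^ a * exp (-(θ * v))) (Ioi 0) := by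
    simpa [rpow_one, neg_mul] using integrableOn_rpow_mul_exp_neg_mul_rpow ha one_pos hθ
  calc ∫ v in Icc 0 u, v ^ a * exp (-(θ * v)) = ∫ v in Ioc 0 u, v ^ a * exp (-(θ * v)) :=
        integral_Icc_eq_integral_Ioc
    _ ≤ ∫ v in Ioi 0, v ^ a * exp (-(θ * v)) :=
        setIntegral_mono_set hint
          (ae_restrict_of_forall_mem measurableSet_Ioi fun v hv =>
            mul_nonneg (rpow_nonneg (le_of_lt hv) a) (exp_pos _).le)
          Ioc_subset_Ioi_self.eventuallyLE
    _ = (1 / θ) ^ (a + 1) * Gamma (a + 1) := by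
        rw [← integral_rpow_mul_exp_neg_mul_Ioi (by linarith) hθ, add_sub_cancel_right]

theorem integral_Icc_integral_Icc_exp_mul_rpow_le (ha : -1 < a) (hθ : 0 < θ) (s : ℝ) :
    ∫ u in Icc 0 s, ∫ r in Icc 0 u, exp (θ * (r + u)) * (u - r) ^ a
      ≤ (1 / θ) ^ (a + 1) * Gamma (a + 1) * (exp (2 * θ * s) / (2 * θ)) := by
  set K := (1 / θ) ^ (a + 1) * Gamma (a + 1)
  have hK : 0 ≤ K := mul_nonneg (by positivity) (Gamma_nonneg_of_nonneg (by linarith))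
  have hinner : ∀ u, ∫ r in Icc 0 u, exp (θ * (r + u)) * (u - r) ^ a
      = exp (2 * θ * u) * ∫ v in Icc 0 u, v ^ a * exp (-(θ * v)) := by
    intro u
    have hrefl := setIntegral_Icc_comp_sub_left (fun v => v ^ a * exp (-(θ * v))) 0 u u
    rw [sub_self, sub_zero] at hrefl
    rw [← hrefl, ← integral_const_mul]
    congr 1 with r
    rw [mul_left_comm, ← exp_add, mul_comm]
    ring_nf
  calc ∫ u in Icc 0 s, ∫ r in Icc 0 u, exp (θ * (r + u)) * (u - r) ^ a
      = ∫ u in Icc 0 s, exp (2 * θ * u) * ∫ v in Icc 0 u, v ^ a * exp (-(θ * v)) := by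
        simp_rw [hinner]
    _ ≤ ∫ u in Icc 0 s, exp (2 * θ * u) * K := by
        refine integral_mono_of_nonneg (ae_restrict_of_forall_mem measurableSet_Icc fun u _ =>
          mul_nonneg (exp_pos _).le (setIntegral_nonneg measurableSet_Icc fun v hv =>
            mul_nonneg (rpow_nonneg hv.1 a) (exp_pos _).le)) ?_ ?_
        · exact (by fun_prop : Continuous fun u => exp (2 * θ * u) * K).integrableOn_Icc
        · exact Filter.Eventually.of_forall fun u => mul_le_mul_of_nonneg_left
            (integral_Icc_rpow_mul_exp_neg_mul_le_Gamma ha hθ u) (exp_pos _).le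
    _ = (∫ u in Icc 0 s, exp (2 * θ * u)) * K := integral_mul_const _ _
    _ ≤ (∫ u in Iic s, exp (2 * θ * u)) * K := by
        refine mul_le_mul_of_nonneg_right ?_ hK
        exact setIntegral_mono_set (integrableOn_exp_mul_Iic (by positivity) s)
          (Filter.Eventually.of_forall fun u => (exp_pos _).le) Icc_subset_Iic_self.eventuallyLE
    _ = K * (exp (2 * θ * s) / (2 * θ)) := by
        rw [integral_exp_mul_Iic (by positivity), mul_comm]

theorem integrableOn_Icc_rpow_mul_exp_mul (ha : -1 < a) (c : ℝ) {T : ℝ} (hT : 0 ≤ T) :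
    IntegrableOn (fun v : ℝ => v ^ a * exp (c * v)) (Icc 0 T) := by
  rw [← intervalIntegrable_iff_integrableOn_Icc_of_le hT]
  exact (intervalIntegral.intervalIntegrable_rpow' ha).mul_continuousOn (by fun_prop)

theorem integral_Icc_exp_mul_integral_Icc_rpow_mul_exp_le (ha : -1 < a) (hθ : 0 < θ) {T : ℝ}
    (hT : 0 ≤ T) :
    ∫ y in Icc 0 T, exp (-(2 * θ) * y) * ∫ v in Icc 0 y, v ^ a * exp (θ * v)
      ≤ T ^ (a + 1) / (a + 1) / (2 * θ) := by
  have hrpow : IntegrableOn (fun v : ℝ => v ^ a) (Icc 0 T) := by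
    rw [← intervalIntegrable_iff_integrableOn_Icc_of_le hT]
    exact intervalIntegral.intervalIntegrable_rpow' ha
  have hprod : IntegrableOn (uncurry fun y v => exp (-(2 * θ) * y) * (v ^ a * exp (θ * v)))
      (Icc 0 T ×ˢ Icc 0 T) := by
    rw [IntegrableOn, Measure.volume_eq_prod ℝ ℝ, ← Measure.prod_restrict]
    exact ((by fun_prop : Continuous fun y => exp (-(2 * θ) * y)).integrableOn_Icc).mul_prod
      (integrableOn_Icc_rpow_mul_exp_mul ha θ hT)
  have htail : ∀ v, ∫ y in Icc v T, exp (-(2 * θ) * y) ≤ exp (-(2 * θ) * v) / (2 * θ) := by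
    intro v
    calc ∫ y in Icc v T, exp (-(2 * θ) * y) = ∫ y in Ioc v T, exp (-(2 * θ) * y) :=
          integral_Icc_eq_integral_Ioc
      _ ≤ ∫ y in Ioi v, exp (-(2 * θ) * y) :=
          setIntegral_mono_set (integrableOn_exp_mul_Ioi (by linarith) v)
            (Filter.Eventually.of_forall fun y => (exp_pos _).le) Ioc_subset_Ioi_self.eventuallyLE
      _ = exp (-(2 * θ) * v) / (2 * θ) := by
          rw [integral_exp_mul_Ioi (by linarith), neg_div_neg_eq]
  calc ∫ y in Icc 0 T, exp (-(2 * θ) * y) * ∫ v in Icc 0 y, v ^ a * exp (θ * v)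
      = ∫ y in Icc 0 T, ∫ v in Icc 0 y, exp (-(2 * θ) * y) * (v ^ a * exp (θ * v)) := by
        simp_rw [integral_const_mul]
    _ = ∫ v in Icc 0 T, (∫ y in Icc v T, exp (-(2 * θ) * y)) * (v ^ a * exp (θ * v)) := by
        simp_rw [integral_Icc_integral_Icc_swap hprod, integral_mul_const]
    _ ≤ ∫ v in Icc 0 T, v ^ a / (2 * θ) := by
        refine integral_mono_of_nonneg (ae_restrict_of_forall_mem measurableSet_Icc fun v hv =>
          mul_nonneg (setIntegral_nonneg measurableSet_Icc fun y _ => (exp_pos _).le)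
            (mul_nonneg (rpow_nonneg hv.1 a) (exp_pos _).le)) (hrpow.div_const _)
          (ae_restrict_of_forall_mem measurableSet_Icc fun v hv => ?_)
        have hva : 0 ≤ v ^ a := rpow_nonneg hv.1 a
        calc (∫ y in Icc v T, exp (-(2 * θ) * y)) * (v ^ a * exp (θ * v))
            ≤ exp (-(2 * θ) * v) / (2 * θ) * (v ^ a * exp (θ * v)) :=
              mul_le_mul_of_nonneg_right (htail v) (mul_nonneg hva (exp_pos _).le)
          _ = v ^ a * exp (-(θ * v)) / (2 * θ) := by
              rw [mul_left_comm, div_mul_eq_mul_div, ← exp_add]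
              ring_nf
          _ ≤ v ^ a / (2 * θ) := by
              gcongr
              exact mul_le_of_le_one_right hva (exp_le_one_iff.2 (by nlinarith [hv.1]))
    _ = T ^ (a + 1) / (a + 1) / (2 * θ) := by
        rw [integral_div, integral_Icc_eq_integral_Ioc, ← intervalIntegral.integral_of_le hT,
          integral_rpow (Or.inl ha), zero_rpow (by linarith), sub_zero]

theorem integral_Icc_integral_Icc_exp_neg_mul_rpow_le (ha : -1 < a) (hθ : 0 < θ) {s t : ℝ}
    (hst : s ≤ t) :
    ∫ u in Icc s t, ∫ r in Icc s u, exp (-θ * (r + u)) * (u - r) ^ a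
      ≤ exp (-(2 * θ) * s) * ((t - s) ^ (a + 1) / (a + 1) / (2 * θ)) := by
  set Φ : ℝ → ℝ := fun y => ∫ v in Icc 0 y, v ^ a * exp (θ * v)
  have hinner : ∀ u, ∫ r in Icc s u, exp (-θ * (r + u)) * (u - r) ^ a
      = exp (-(2 * θ) * u) * Φ (u - s) := by
    intro u
    have hrefl := setIntegral_Icc_comp_sub_left (fun v => v ^ a * exp (θ * v)) s u u
    rw [sub_self] at hrefl
    simp only [Φ]
    rw [← hrefl, ← integral_const_mul]
    congr 1 with r
    rw [mul_left_comm, ← exp_add, mul_comm]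
    ring_nf
  have hshift := setIntegral_Icc_comp_sub_right
    (fun y => exp (-(2 * θ) * s) * (exp (-(2 * θ) * y) * Φ y)) s t s
  rw [sub_self] at hshift
  calc ∫ u in Icc s t, ∫ r in Icc s u, exp (-θ * (r + u)) * (u - r) ^ a
      = ∫ u in Icc s t, exp (-(2 * θ) * s) * (exp (-(2 * θ) * (u - s)) * Φ (u - s)) := by
        congr 1 with u
        rw [hinner, ← mul_assoc, ← exp_add]
        congr 2
        ring
    _ = exp (-(2 * θ) * s) * ∫ y in Icc 0 (t - s), exp (-(2 * θ) * y) * Φ y := by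
        rw [hshift, integral_const_mul]
    _ ≤ exp (-(2 * θ) * s) * ((t - s) ^ (a + 1) / (a + 1) / (2 * θ)) :=
        mul_le_mul_of_nonneg_left
          (integral_Icc_exp_mul_integral_Icc_rpow_mul_exp_le ha hθ (sub_nonneg.2 hst))
          (exp_pos _).le

end ExpRpowKernel

theorem exp_neg_mul_sub_mul_exp_neg_mul_sub (c x₁ y₁ x₂ y₂ : ℝ) :
    exp (-c * (x₂ - x₁)) * exp (-c * (y₂ - y₁)) = exp (-c * (x₂ + y₂)) * exp (c * (x₁ + y₁)) := by
  rw [← exp_add, ← exp_add]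
  ring_nf

theorem stmt_8_general (β θ : ℝ) (hβ : β ∈ Set.Ioo (1/2 : ℝ) 1) (hθ : 0 < θ)
    (s t : ℝ) (hst : s < t) :
    (∫ u2 in Set.Icc s t, ∫ r2 in Set.Icc s u2, ∫ u1 in Set.Icc (0:ℝ) s, ∫ r1 in Set.Icc (0:ℝ) u1,
        Real.exp (-θ * (r2 - r1)) * Real.exp (-θ * (u2 - u1)) *
          (u1 - r1) ^ (2 * β - 2) * (u2 - r2) ^ (2 * β - 2))
      ≤ Real.Gamma (2 * β - 1) / (4 * θ ^ (2 * β + 1) * (2 * β - 1)) * (t - s) ^ (2 * β - 1) := by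
  have ha : -1 < 2 * β - 2 := by linarith [hβ.1]
  have hpos : 0 < 2 * β - 1 := by linarith [hβ.1]
  have hexp : 2 * β - 2 + 1 = 2 * β - 1 := by ring
  have hsplit : ∀ r1 u1 r2 u2 : ℝ,
      exp (-θ * (r2 - r1)) * exp (-θ * (u2 - u1)) * (u1 - r1) ^ (2 * β - 2) *
          (u2 - r2) ^ (2 * β - 2)
        = exp (-θ * (r2 + u2)) * (u2 - r2) ^ (2 * β - 2) *
          (exp (θ * (r1 + u1)) * (u1 - r1) ^ (2 * β - 2)) := by
    intro r1 u1 r2 u2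
    rw [exp_neg_mul_sub_mul_exp_neg_mul_sub]
    ring
  have hlower := integral_Icc_integral_Icc_exp_mul_rpow_le ha hθ s
  have hupper := integral_Icc_integral_Icc_exp_neg_mul_rpow_le ha hθ hst.le
  rw [hexp] at hlower hupper
  simp_rw [hsplit, integral_const_mul, integral_mul_const]
  calc _ ≤ exp (-(2 * θ) * s) * ((t - s) ^ (2 * β - 1) / (2 * β - 1) / (2 * θ)) *
        ((1 / θ) ^ (2 * β - 1) * Gamma (2 * β - 1) * (exp (2 * θ * s) / (2 * θ))) :=
        mul_le_mul hupper hlower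
          (setIntegral_nonneg measurableSet_Icc fun u _ =>
            setIntegral_nonneg measurableSet_Icc fun r hr =>
              mul_nonneg (exp_pos _).le (rpow_nonneg (sub_nonneg.2 hr.2) _))
          (by have := sub_pos.2 hst; positivity)
    _ = Gamma (2 * β - 1) / (4 * θ ^ (2 * β + 1) * (2 * β - 1)) * (t - s) ^ (2 * β - 1) := by
        rw [show 2 * β + 1 = 2 * β - 1 + 2 by ring, rpow_add hθ, one_div, inv_rpow hθ.le, rpow_two,
          neg_mul, exp_neg]
        field_simp
        ring

theorem stmt_8 (β θ : ℝ) (hβ : β ∈ Set.Ioo (1/2 : ℝ) 1) (hθ : 0 < θ)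
    (s t : ℝ) (hs : 0 ≤ s) (hst : s < t) :
    (∫ u2 in Set.Icc s t, ∫ r2 in Set.Icc s u2, ∫ u1 in Set.Icc (0:ℝ) s, ∫ r1 in Set.Icc (0:ℝ) u1,
        Real.exp (-θ * (r2 - r1)) * Real.exp (-θ * (u2 - u1)) *
          (u1 - r1) ^ (2 * β - 2) * (u2 - r2) ^ (2 * β - 2))
      ≤ Real.Gamma (2 * β - 1) / (4 * θ ^ (2 * β + 1) * (2 * β - 1)) * (t - s) ^ (2 * β - 1) :=
  stmt_8_general β θ hβ hθ s t hst
end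

section
/- Let $c > 0$ and $T > 0$, and for $z > -c\sqrt{T}$ set $\nu(z) = \frac{c\sqrt{T}}{2\beta}\big[(1 + \frac{z}{c\sqrt{T}})^{-2\beta} - 1\big]$ where $\beta \in (1/2,1)$. Let $\Phi$ denote the standard normal CDF and $\bar\Phi = 1 - \Phi$. Then there exists a constant $C > 0$ independent of $T$ such that $\sup_{z > -c\sqrt{T}} |\bar\Phi(\nu(z)) - \Phi(z)| \leq C/\sqrt{T}$ for all $T \ge 1$. -/
/-!
Put `a = c √T`, `q = 2β` and `z = a u`. By the symmetry of `Φ`, `1 - Φ(ν(z)) = Φ(-ν(z))`, and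
Bernoulli's inequality gives `-ν(z) ≤ z`, so the quantity to bound is the Gaussian mass of
`[-ν(z), z]`. For `u ≤ -1/2` the point `z` lies below `-a/2`, and for `u > 1` the point `-ν(z)`
lies above `a/4`, so the tail bound `Φ(-x) ≤ 1/x` suffices. For `-1/2 < u ≤ 1` the interval
has length `z + ν(z) ≤ 8 z²/a` and stays where `|t| ≥ |z|/4`, so its mass is at most
`8 z² e^{-z²/32}/a ≤ 256/a`.
-/

open MeasureTheory Real Set Filter ProbabilityTheory

noncomputable def stdNormalCDF (z : ℝ) : ℝ := ∫ t in Iic z, gaussianPDFReal 0 1 t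

section StdNormal

lemma gaussianPDFReal_zero_one (t : ℝ) :
    gaussianPDFReal 0 1 t = exp (-t ^ 2 / 2) / √(2 * π) := by
  simp [gaussianPDFReal, div_eq_inv_mul]

lemma one_le_sqrt_two_mul_pi : 1 ≤ √(2 * π) :=
  one_le_sqrt.mpr (by nlinarith [pi_gt_three])

lemma gaussianPDFReal_zero_one_le_exp (t : ℝ) : gaussianPDFReal 0 1 t ≤ exp (-t ^ 2 / 2) := by
  rw [gaussianPDFReal_zero_one]
  exact div_le_self (exp_pos _).le one_le_sqrt_two_mul_pi

lemma gaussianPDFReal_zero_one_le_of_sq_le {r s : ℝ} (h : r ^ 2 ≤ s ^ 2) :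
    gaussianPDFReal 0 1 s ≤ gaussianPDFReal 0 1 r := by
  simp only [gaussianPDFReal_zero_one]
  gcongr

lemma stdNormalCDF_sub {x y : ℝ} (h : x ≤ y) :
    stdNormalCDF y - stdNormalCDF x = ∫ t in Ioc x y, gaussianPDFReal 0 1 t := by
  have hi := integrable_gaussianPDFReal 0 1
  rw [stdNormalCDF, stdNormalCDF, ← Iic_union_Ioc_eq_Iic h,
    setIntegral_union (Iic_disjoint_Ioc le_rfl) measurableSet_Ioc hi.integrableOn hi.integrableOn]
  ring

lemma stdNormalCDF_sub_le_mul {x y M : ℝ} (h : x ≤ y)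
    (hM : ∀ t ∈ Ioc x y, gaussianPDFReal 0 1 t ≤ M) :
    stdNormalCDF y - stdNormalCDF x ≤ (y - x) * M := by
  rw [stdNormalCDF_sub h]
  calc ∫ t in Ioc x y, gaussianPDFReal 0 1 t ≤ ∫ _ in Ioc x y, M :=
        setIntegral_mono_on (integrable_gaussianPDFReal 0 1).integrableOn
          (integrableOn_const measure_Ioc_lt_top.ne) measurableSet_Ioc hM
    _ = (y - x) * M := by simp [Real.volume_real_Ioc_of_le h]

lemma stdNormalCDF_nonneg (z : ℝ) : 0 ≤ stdNormalCDF z :=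
  setIntegral_nonneg measurableSet_Iic fun t _ => gaussianPDFReal_nonneg 0 1 t

lemma stdNormalCDF_mono : Monotone stdNormalCDF := fun x y h => by
  have := stdNormalCDF_sub h
  have : 0 ≤ ∫ t in Ioc x y, gaussianPDFReal 0 1 t :=
    setIntegral_nonneg measurableSet_Ioc fun t _ => gaussianPDFReal_nonneg 0 1 t
  linarith

lemma stdNormalCDF_neg (x : ℝ) : stdNormalCDF (-x) = 1 - stdNormalCDF x := by
  have hi := integrable_gaussianPDFReal 0 1
  have hsplit := intervalIntegral.integral_Iic_add_Ioi (b := x) hi.integrableOn hi.integrableOn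
  rw [integral_gaussianPDFReal_eq_one 0 one_ne_zero] at hsplit
  have hrefl : stdNormalCDF (-x) = ∫ t in Ioi x, gaussianPDFReal 0 1 t := by
    rw [stdNormalCDF, ← integral_comp_neg_Ioi]
    simp only [gaussianPDFReal_zero_one, neg_sq]
  rw [hrefl, stdNormalCDF]
  linarith

lemma hasDerivAt_exp_neg_sq_div_two (t : ℝ) :
    HasDerivAt (fun s => exp (-s ^ 2 / 2)) (-t * exp (-t ^ 2 / 2)) t := by
  have h : HasDerivAt (fun s : ℝ => -s ^ 2 / 2) (-t) t := by
    have e : (fun s : ℝ => -s ^ 2 / 2) = fun s => -(1 / 2) * s ^ 2 := by ext; ring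
    rw [e]
    exact ((hasDerivAt_pow 2 t).const_mul _).congr_deriv (by norm_num; ring)
  convert h.exp using 1
  ring

lemma integrable_neg_mul_exp_neg_sq_div_two : Integrable fun t : ℝ => -t * exp (-t ^ 2 / 2) := by
  convert (integrable_mul_exp_neg_mul_sq (b := 1 / 2) (by norm_num)).neg using 1
  ext t
  rw [Pi.neg_apply, show -t ^ 2 / 2 = -(1 / 2) * t ^ 2 by ring, neg_mul]

lemma integral_Iic_neg_mul_exp_neg_sq_div_two (z : ℝ) :
    ∫ t in Iic z, -t * exp (-t ^ 2 / 2) = exp (-z ^ 2 / 2) := by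
  have hsq : Tendsto (fun t : ℝ => t ^ 2) atBot atTop := by
    simpa only [Function.comp_def, neg_sq] using
      (tendsto_pow_atTop (α := ℝ) two_ne_zero).comp tendsto_neg_atBot_atTop
  have hlim : Tendsto (fun t : ℝ => exp (-t ^ 2 / 2)) atBot (nhds 0) :=
    tendsto_exp_atBot.comp ((tendsto_neg_atTop_atBot.comp hsq).atBot_div_const two_pos)
  rw [integral_Iic_of_hasDerivAt_of_tendsto
    (hasDerivAt_exp_neg_sq_div_two z).continuousAt.continuousWithinAt
    (fun t _ => hasDerivAt_exp_neg_sq_div_two t)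
    integrable_neg_mul_exp_neg_sq_div_two.integrableOn hlim, sub_zero]

/-- On `t ≤ z < 0` the density is at most `t / z` times itself, and
`-t e^{-t²/2}` has the explicit antiderivative `e^{-t²/2}`. -/
lemma stdNormalCDF_le_one_div_neg {z : ℝ} (hz : z < 0) : stdNormalCDF z ≤ 1 / -z := by
  calc stdNormalCDF z ≤ ∫ t in Iic z, -t * exp (-t ^ 2 / 2) / -z := by
        refine setIntegral_mono_on (integrable_gaussianPDFReal 0 1).integrableOn
          (integrable_neg_mul_exp_neg_sq_div_two.div_const _).integrableOn
          measurableSet_Iic fun t ht => ?_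
        rw [le_div_iff₀ (by linarith)]
        calc gaussianPDFReal 0 1 t * -z ≤ exp (-t ^ 2 / 2) * -z := by
              gcongr
              · linarith
              · exact gaussianPDFReal_zero_one_le_exp t
          _ ≤ -t * exp (-t ^ 2 / 2) := by rw [mul_comm]; gcongr; exact ht
    _ = exp (-z ^ 2 / 2) / -z := by rw [integral_div, integral_Iic_neg_mul_exp_neg_sq_div_two]
    _ ≤ 1 / -z := by
        gcongr
        · linarith
        · exact exp_le_one_iff.mpr (by nlinarith)

end StdNormal

section RpowBounds

variable {q u : ℝ}

/-- Writing `(1 + u) ^ (-q) = (1 + w) ^ q` with `w = -u / (1 + u)`, Bernoulli's inequality for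
the exponent `q - 1 ∈ [0, 1]` gives `(1 + w) ^ q ≤ (1 + w) (1 + (q - 1) w)`. -/
lemma rpow_neg_sub_one_add_mul_le (hu : -(1 / 2) ≤ u) (hq₁ : 1 ≤ q) (hq₂ : q ≤ 2) :
    (1 + u) ^ (-q) - 1 + q * u ≤ 8 * u ^ 2 := by
  have h0 : 0 < 1 + u := by linarith
  set w := -u / (1 + u) with hw
  have h1w : 1 + w = (1 + u)⁻¹ := by rw [hw]; field_simp; ring
  have h1w_pos : 0 < 1 + w := by rw [h1w]; positivity
  have hpow : (1 + u) ^ (-q) = (1 + w) * (1 + w) ^ (q - 1) := by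
    rw [← rpow_one_add' h1w_pos.le (by linarith), add_sub_cancel, h1w, inv_rpow h0.le,
      rpow_neg h0.le]
  have hbern : (1 + w) ^ (q - 1) ≤ 1 + (q - 1) * w :=
    rpow_one_add_le_one_add_mul_self (by linarith) (by linarith) (by linarith)
  have hwu : w + u = u ^ 2 / (1 + u) := by rw [hw]; field_simp; ring
  have hwu_le : w + u ≤ 2 * u ^ 2 := by
    rw [hwu, div_le_iff₀ h0]; nlinarith [sq_nonneg u]
  have hw_sq : w ^ 2 ≤ 4 * u ^ 2 := by
    have h14 : 1 / 4 ≤ (1 + u) ^ 2 := by nlinarith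
    rw [hw, div_pow, div_le_iff₀ (by positivity)]
    nlinarith [mul_le_mul_of_nonneg_left h14 (sq_nonneg u)]
  have hwu_nonneg : 0 ≤ w + u := by rw [hwu]; positivity
  calc (1 + u) ^ (-q) - 1 + q * u ≤ (1 + w) * (1 + (q - 1) * w) - 1 + q * u := by
        rw [hpow]; gcongr
    _ = q * (w + u) + (q - 1) * w ^ 2 := by ring
    _ ≤ 2 * (2 * u ^ 2) + 1 * (4 * u ^ 2) := by
        gcongr; linarith
    _ = 8 * u ^ 2 := by ring

lemma one_sub_mul_le_rpow_neg (hu : -1 < u) (hq : 0 ≤ q) : 1 - q * u ≤ (1 + u) ^ (-q) := by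
  have h0 : 0 < 1 + u := by linarith
  have hlog : log (1 + u) ≤ u := by linarith [log_le_sub_one_of_pos h0]
  rw [rpow_def_of_pos h0]
  nlinarith [add_one_le_exp (log (1 + u) * -q)]

lemma div_one_add_le_one_sub_rpow_neg (hu : 0 ≤ u) (hq : 1 ≤ q) :
    u / (1 + u) ≤ 1 - (1 + u) ^ (-q) := by
  have h0 : 0 < 1 + u := by linarith
  have h : (1 + u) ^ (-q) ≤ (1 + u) ^ (-1 : ℝ) :=
    rpow_le_rpow_of_exponent_le (by linarith) (by linarith)
  rw [rpow_neg_one] at h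
  have : u / (1 + u) = 1 - (1 + u)⁻¹ := by field_simp; ring
  linarith

end RpowBounds

lemma sq_mul_exp_neg_div_le (z : ℝ) {b : ℝ} (hb : 0 < b) : z ^ 2 * exp (-z ^ 2 / b) ≤ b := by
  rw [neg_div, exp_neg, mul_inv_le_iff₀ (exp_pos _)]
  calc z ^ 2 = b * (z ^ 2 / b) := by field_simp
    _ ≤ b * exp (z ^ 2 / b) := by gcongr; linarith [add_one_le_exp (z ^ 2 / b)]

lemma stdNormalCDF_sub_le_of_sub_le_sq {a g z : ℝ} (ha : 0 < a) (hgz : g ≤ z)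
    (hzg : z - g ≤ 8 * z ^ 2 / a) (hsq : ∀ t ∈ Ioc g z, (z / 4) ^ 2 ≤ t ^ 2) :
    stdNormalCDF z - stdNormalCDF g ≤ 256 / a := by
  calc stdNormalCDF z - stdNormalCDF g ≤ (z - g) * gaussianPDFReal 0 1 (z / 4) :=
        stdNormalCDF_sub_le_mul hgz fun t ht => gaussianPDFReal_zero_one_le_of_sq_le (hsq t ht)
    _ ≤ 8 * z ^ 2 / a * exp (-z ^ 2 / 32) := by
        gcongr
        · exact gaussianPDFReal_nonneg 0 1 _
        · exact (gaussianPDFReal_zero_one_le_exp _).trans_eq (by ring_nf)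
    _ = 8 / a * (z ^ 2 * exp (-z ^ 2 / 32)) := by ring
    _ ≤ 8 / a * 32 := by gcongr; exact sq_mul_exp_neg_div_le z (by norm_num)
    _ = 256 / a := by ring

/-- The paper's `ν(z)`, with `a = c √T` and `q = 2 β`. -/
noncomputable def nu (q a z : ℝ) : ℝ := a / q * ((1 + z / a) ^ (-q) - 1)

section Nu

variable {q a u : ℝ}

lemma neg_nu_mul (ha : a ≠ 0) : -nu q a (a * u) = a / q * (1 - (1 + u) ^ (-q)) := by
  rw [nu, mul_div_cancel_left₀ u ha]; ring

lemma neg_nu_mul_le (hq : 0 < q) (ha : 0 < a) (hu : -1 < u) : -nu q a (a * u) ≤ a * u := by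
  rw [neg_nu_mul ha.ne']
  calc a / q * (1 - (1 + u) ^ (-q)) ≤ a / q * (q * u) := by
        gcongr; linarith [one_sub_mul_le_rpow_neg hu hq.le]
    _ = a * u := by field_simp

lemma mul_sub_neg_nu_mul_le (hq₁ : 1 ≤ q) (hq₂ : q ≤ 2) (ha : 0 < a) (hu : -(1 / 2) ≤ u) :
    a * u - -nu q a (a * u) ≤ 8 * (a * u) ^ 2 / a := by
  calc a * u - -nu q a (a * u) = a / q * ((1 + u) ^ (-q) - 1 + q * u) := by
        rw [neg_nu_mul ha.ne']; field_simp; ring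
    _ ≤ a / 1 * (8 * u ^ 2) := by
        gcongr
        · linarith [one_sub_mul_le_rpow_neg (by linarith : -1 < u) (by linarith : 0 ≤ q)]
        · exact rpow_neg_sub_one_add_mul_le hu hq₁ hq₂
    _ = 8 * (a * u) ^ 2 / a := by field_simp

lemma div_two_mul_div_le_neg_nu_mul (hq₁ : 1 ≤ q) (hq₂ : q ≤ 2) (ha : 0 < a) (hu : 0 ≤ u) :
    a / 2 * (u / (1 + u)) ≤ -nu q a (a * u) := by
  rw [neg_nu_mul ha.ne']
  calc a / 2 * (u / (1 + u)) ≤ a / q * (u / (1 + u)) := by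
        gcongr
    _ ≤ a / q * (1 - (1 + u) ^ (-q)) := by gcongr; exact div_one_add_le_one_sub_rpow_neg hu hq₁

end Nu

lemma stdNormalCDF_sub_stdNormalCDF_neg_nu_le {q a z : ℝ} (hq₁ : 1 ≤ q) (hq₂ : q ≤ 2)
    (ha : 0 < a) (hz : -a < z) :
    stdNormalCDF z - stdNormalCDF (-nu q a z) ≤ 256 / a := by
  obtain ⟨u, rfl⟩ : ∃ u, z = a * u := ⟨z / a, by field_simp⟩
  have hu : -1 < u := by nlinarith
  set g := -nu q a (a * u)
  rcases le_or_gt u (-(1 / 2)) with hu_left | hu_left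
  · have hz : a * u < 0 := by nlinarith
    calc stdNormalCDF (a * u) - stdNormalCDF g ≤ stdNormalCDF (a * u) := by
          linarith [stdNormalCDF_nonneg g]
      _ ≤ 1 / -(a * u) := stdNormalCDF_le_one_div_neg hz
      _ ≤ 256 / a := by rw [div_le_div_iff₀ (by linarith) ha]; nlinarith
  rcases le_or_gt u 1 with hu_mid | hu_right
  · refine stdNormalCDF_sub_le_of_sub_le_sq ha (neg_nu_mul_le (by linarith) ha hu)
      (mul_sub_neg_nu_mul_le hq₁ hq₂ ha hu_left.le) fun t ⟨hgt, htz⟩ => ?_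
    rcases le_or_gt u 0 with hu₀ | hu₀
    · have hz : a * u ≤ 0 := mul_nonpos_of_nonneg_of_nonpos ha.le hu₀
      have : (a * u) ^ 2 ≤ t ^ 2 := by nlinarith
      nlinarith
    · have : a * u / 4 ≤ a / 2 * (u / (1 + u)) := by
        rw [mul_div_assoc', div_le_div_iff₀ (by norm_num) (by linarith)]
        nlinarith [mul_nonneg (mul_pos ha hu₀).le (sub_nonneg.mpr hu_mid)]
      have := div_two_mul_div_le_neg_nu_mul hq₁ hq₂ ha hu₀.le
      nlinarith
  · have hg : a / 4 ≤ g := by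
      have : 1 / 2 ≤ u / (1 + u) := by rw [le_div_iff₀ (by linarith)]; linarith
      calc a / 4 = a / 2 * (1 / 2) := by ring
        _ ≤ a / 2 * (u / (1 + u)) := by gcongr
        _ ≤ g := div_two_mul_div_le_neg_nu_mul hq₁ hq₂ ha (by linarith)
    calc stdNormalCDF (a * u) - stdNormalCDF g ≤ 1 - stdNormalCDF g := by
          linarith [stdNormalCDF_neg (a * u), stdNormalCDF_nonneg (-(a * u))]
      _ = stdNormalCDF (-g) := (stdNormalCDF_neg g).symm
      _ ≤ 1 / -(-g) := stdNormalCDF_le_one_div_neg (by linarith)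
      _ ≤ 256 / a := by rw [neg_neg, div_le_div_iff₀ (by linarith) ha]; linarith

lemma abs_one_sub_stdNormalCDF_nu_sub_le {q a z : ℝ} (hq₁ : 1 ≤ q) (hq₂ : q ≤ 2)
    (ha : 0 < a) (hz : -a < z) :
    |1 - stdNormalCDF (nu q a z) - stdNormalCDF z| ≤ 256 / a := by
  have hmono : stdNormalCDF (-nu q a z) ≤ stdNormalCDF z := by
    obtain ⟨u, rfl⟩ : ∃ u, z = a * u := ⟨z / a, by field_simp⟩
    exact stdNormalCDF_mono (neg_nu_mul_le (by linarith) ha (by nlinarith))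
  rw [← stdNormalCDF_neg, abs_sub_comm, abs_of_nonneg (by linarith)]
  exact stdNormalCDF_sub_stdNormalCDF_neg_nu_le hq₁ hq₂ ha hz

theorem stmt_17 (β c : ℝ) (hβ : β ∈ Set.Ioo (1/2 : ℝ) 1) (hc : 0 < c)
    (Φ : ℝ → ℝ)
    (hΦ : Φ = fun z => ∫ t in Set.Iic z, Real.exp (-t ^ (2:ℕ) / 2) / Real.sqrt (2 * Real.pi)) :
    ∃ C > (0:ℝ), ∀ T : ℝ, 1 ≤ T → ∀ z : ℝ, -c * Real.sqrt T < z →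
      |(1 - Φ (c * Real.sqrt T / (2 * β) *
            ((1 + z / (c * Real.sqrt T)) ^ (-(2 * β)) - 1))) - Φ z|
        ≤ C / Real.sqrt T := by
  have hΦ_eq : Φ = stdNormalCDF := by
    ext z; simp only [hΦ, stdNormalCDF, gaussianPDFReal_zero_one]
  refine ⟨256 / c, by positivity, fun T hT z hz => ?_⟩
  have hsqrtT : 0 < √T := sqrt_pos.mpr (by linarith)
  rw [hΦ_eq, div_div]
  exact abs_one_sub_stdNormalCDF_nu_sub_le (by linarith [hβ.1]) (by linarith [hβ.2])
    (by positivity) (by linarith)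
end
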